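/- Let G be an (s,k)-edge-connected graph with k ≥ 2 and deg(s) ≥ 4. If A₁ and A₂ are the unique minimal dangerous sets in G corresponding to two disjoint maximal independent sets of L(G,s,k) of size at least 2, then A₁ ∩ A₂ = ∅. -/

import Mathlib

/-- A finite loopless multigraph. -/
structure Multigraph where
  V : Type
  E : Type
  [finV : Fintype V]
  [finE : Fintype E]
  [decV : DecidableEq V]
  [decE : DecidableEq E]
  ends : E → Sym2 V
  loopless : ∀ e, ¬ (ends e).IsDiag

attribute [instance] Multigraph.finV Multigraph.finE Multigraph.decV Multigraph.decE

namespace Multigraph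

variable (G : Multigraph)

/-- Walks in a multigraph, recorded as lists of edges. -/
inductive IsWalk (G : Multigraph) : G.V → G.V → List G.E → Prop
  | nil (v : G.V) : IsWalk G v v []
  | cons {u v w : G.V} {e : G.E} {p : List G.E} :
      G.ends e = s(u, v) → IsWalk G v w p → IsWalk G u w (e :: p)

/-- There exist `k` pairwise edge-disjoint paths from `u` to `v`. -/
def EdgeDisjointPaths (u v : G.V) (k : ℕ) : Prop :=
  ∃ P : Fin k → List G.E, (∀ i, G.IsWalk u v (P i)) ∧
    ∀ i j, i ≠ j → ∀ e, e ∈ P i → e ∉ P j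

/-- There exist `k` pairwise edge-disjoint paths from `u` to `v` using only
edges with both ends in `B`. -/
def EdgeDisjointPathsWithin (B : Set G.V) (u v : G.V) (k : ℕ) : Prop :=
  ∃ P : Fin k → List G.E,
    (∀ i, G.IsWalk u v (P i) ∧ ∀ e ∈ P i, ∀ w ∈ G.ends e, w ∈ B) ∧
    ∀ i j, i ≠ j → ∀ e, e ∈ P i → e ∉ P j

/-- `G` is `(s,k)`-edge-connected: it has at least three vertices and any two
vertices different from `s` are joined by `k` pairwise edge-disjoint paths. -/
def SKConnected (s : G.V) (k : ℕ) : Prop :=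
  3 ≤ Fintype.card G.V ∧
    ∀ u v : G.V, u ≠ s → v ≠ s → G.EdgeDisjointPaths u v k

/-- The edge cut `δ(A)`: edges with exactly one end in `A`. -/
def cutSet (A : Set G.V) : Set G.E :=
  {e | ∃ u v, G.ends e = s(u, v) ∧ u ∈ A ∧ v ∉ A}

/-- `δ(A:B)`: edges with one end in `A` and the other in `B`. -/
def between (A B : Set G.V) : Set G.E :=
  {e | ∃ u v, G.ends e = s(u, v) ∧ u ∈ A ∧ v ∈ B}

/-- The set of edges incident with `s`. -/
def incEdges (s : G.V) : Set G.E := {e | s ∈ G.ends e}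

/-- The degree of `s`: the number of edges incident with `s` (counted with
multiplicity). -/
noncomputable def deg (s : G.V) : ℕ := (G.incEdges s).ncard

/-- The set of neighbours of `s`. -/
def neighborSet (s : G.V) : Set G.V := {v | ∃ e, G.ends e = s(s, v)}

/-- `A ⊆ V(G)\{s}` is `k`-dangerous if it is nonempty, misses some non-`s`
vertex, and `|δ(A)| ≤ k+1`. -/
def Dangerous (s : G.V) (k : ℕ) (A : Set G.V) : Prop :=
  A.Nonempty ∧ s ∉ A ∧ (A ∪ {s})ᶜ.Nonempty ∧ (G.cutSet A).ncard ≤ k + 1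

/-- The other end of an edge incident with `s` (junk value `s` otherwise). -/
def otherEnd (s : G.V) (e : G.E) : G.V :=
  if h : s ∈ G.ends e then Sym2.Mem.other' h else s

/-- The lift of `G` at `s` obtained from the pair of edges `e, f`: both are
deleted and an edge joining their other ends is added (no edge is added if the
other ends coincide, i.e. `e` and `f` are parallel). -/
def lift (s : G.V) (e f : G.E) : Multigraph where
  V := G.V
  E := {x : G.E // x ≠ e ∧ x ≠ f} ⊕ PLift (G.otherEnd s e ≠ G.otherEnd s f)
  finV := inferInstance
  finE := by
    haveI : Fintype (PLift (G.otherEnd s e ≠ G.otherEnd s f)) := by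
      by_cases h : G.otherEnd s e ≠ G.otherEnd s f
      · exact Fintype.ofSubsingleton ⟨h⟩
      · haveI : IsEmpty (PLift (G.otherEnd s e ≠ G.otherEnd s f)) := ⟨fun x => h x.down⟩
        exact Fintype.ofIsEmpty
    infer_instance
  decV := inferInstance
  decE := by
    haveI : DecidableEq (PLift (G.otherEnd s e ≠ G.otherEnd s f)) :=
      fun a b => isTrue (Subsingleton.elim a b)
    infer_instance
  ends := fun x => match x with
    | Sum.inl y => G.ends y.1
    | Sum.inr _ => s(G.otherEnd s e, G.otherEnd s f)
  loopless := by
    rintro (y | h)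
    · exact G.loopless y.1
    · simpa using h.down

/-- The pair of edges `e, f` at `s` is `k`-liftable if the lift of `G` at
`e, f` is still `(s,k)`-edge-connected. -/
def IsLiftable (s : G.V) (k : ℕ) (e f : G.E) : Prop :=
  (G.lift s e f).SKConnected s k ∧ (G.lift s f e).SKConnected s k

/-- The `k`-lifting graph `L(G,s,k)`: vertices are the edges incident with
`s`, adjacent iff they form a `k`-liftable pair. -/
def liftingGraph (s : G.V) (k : ℕ) : SimpleGraph ↥(G.incEdges s) where
  Adj e f := e ≠ f ∧ G.IsLiftable s k e.1 f.1 ∧ G.IsLiftable s k f.1 e.1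
  symm := ⟨fun a b h => ⟨h.1.symm, h.2.2, h.2.1⟩⟩
  loopless := ⟨fun a h => h.1 rfl⟩

/-- A dangerous set corresponding to an independent set `I` of the lifting
graph: it contains the non-`s` ends of all edges of `I`. -/
def CorrDangerous (s : G.V) (k : ℕ) (I : Set ↥(G.incEdges s)) (A : Set G.V) : Prop :=
  G.Dangerous s k A ∧ ∀ e : ↥(G.incEdges s), e ∈ I → G.otherEnd s e.1 ∈ A

/-- A minimal dangerous set corresponding to `I`. -/
def MinCorrDangerous (s : G.V) (k : ℕ) (I : Set ↥(G.incEdges s)) (A : Set G.V) : Prop :=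
  G.CorrDangerous s k I A ∧ ∀ B, G.CorrDangerous s k I B → B ⊆ A → B = A

/-- Reachability in a multigraph. -/
def Reachable (u v : G.V) : Prop := ∃ p, G.IsWalk u v p

/-- Reachability avoiding a set `F` of edges. -/
def ReachableOutside (F : Set G.E) (u v : G.V) : Prop :=
  ∃ p, G.IsWalk u v p ∧ ∀ e ∈ p, e ∉ F

/-- Deleting the edge set `F` disconnects `G`. -/
def Disconnects (F : Set G.E) : Prop :=
  ∃ u v, G.Reachable u v ∧ ¬ G.ReachableOutside F u v

/-- A cut-edge: its deletion disconnects the graph. -/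
def IsCutEdge (e : G.E) : Prop := G.Disconnects {e}

/-- A minimal edge-cut: an inclusion-minimal set of edges whose deletion
disconnects the graph. -/
def IsMinimalCut (F : Set G.E) : Prop :=
  G.Disconnects F ∧ ∀ F' ⊂ F, ¬ G.Disconnects F'

/-- `G` has an `(s,r)`-path structure with blobs `B 0, …, B (n-1)`. -/
def PathStructure (s : G.V) (r : ℕ) {n : ℕ} (B : Fin n → Set G.V) : Prop :=
  3 ≤ n ∧
  (∀ i j, i ≠ j → Disjoint (B i) (B j)) ∧
  (⋃ i, B i) = {s}ᶜ ∧
  ∀ i : Fin n, ∀ h1 : 0 < i.1, ∀ h2 : i.1 < n - 1,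
    (G.cutSet (B i)).ncard = 2 * r + 1 ∧
    (G.between (B i) {s}).ncard = 1 ∧
    (G.between (B i) (B ⟨i.1 - 1, by omega⟩)).ncard = r ∧
    (G.between (B i) (B ⟨i.1 + 1, by omega⟩)).ncard = r

end Multigraph

section SimpleGraphDefs

variable {α : Type*}

/-- `I` is an independent set of a simple graph. -/
def IndepSet (H : SimpleGraph α) (I : Set α) : Prop :=
  ∀ a ∈ I, ∀ b ∈ I, ¬ H.Adj a b

/-- `I` is a maximal independent set. -/
def MaxIndepSet (H : SimpleGraph α) (I : Set α) : Prop :=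
  IndepSet H I ∧ ∀ J, IndepSet H J → I ⊆ J → J = I

/-- The independence graph of `H`: vertices are the maximal independent sets
of `H`, adjacent iff they intersect. -/
def independenceGraph (H : SimpleGraph α) :
    SimpleGraph {I : Set α // MaxIndepSet H I} where
  Adj I J := I ≠ J ∧ (I.1 ∩ J.1).Nonempty
  symm := ⟨fun I J h => ⟨h.1.symm, by rw [Set.inter_comm]; exact h.2⟩⟩
  loopless := ⟨fun I h => h.1 rfl⟩

/-- `H` is complete multipartite: non-adjacency is transitive. -/
def IsCompleteMultipartite (H : SimpleGraph α) : Prop :=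
  Transitive fun a b => ¬ H.Adj a b

/-- `H` is a star: there is a centre adjacent to exactly the other vertices,
which are pairwise non-adjacent. -/
def IsStarGraph (H : SimpleGraph α) : Prop :=
  ∃ c : α, ∀ a b, H.Adj a b ↔ (a ≠ b ∧ (a = c ∨ b = c))

end SimpleGraphDefs


namespace Multigraph

lemma ends_otherEnd (G : Multigraph) {s : G.V} {e : G.E} (he : s ∈ G.ends e) :
    G.ends e = s(s, G.otherEnd s e) := by
  rw [otherEnd, dif_pos he]
  exact (Sym2.other_spec' he).symm

lemma exists_cross (G : Multigraph) (A : Set G.V) {u v : G.V} {p : List G.E}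
    (h : G.IsWalk u v p) (hu : u ∈ A) (hv : v ∉ A) :
    ∃ e ∈ p, e ∈ G.cutSet A := by
  induction h with
  | nil w => exact absurd hu hv
  | @cons a b c e q he hw ih =>
    by_cases hb : b ∈ A
    · obtain ⟨e', he', hc⟩ := ih hb hv
      exact ⟨e', List.mem_cons_of_mem _ he', hc⟩
    · exact ⟨e, List.mem_cons_self, ⟨a, b, he, hu, hb⟩⟩

lemma cut_ge (G : Multigraph) (A : Set G.V) {u v : G.V} {k : ℕ}
    (hu : u ∈ A) (hv : v ∉ A) (h : G.EdgeDisjointPaths u v k) :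
    k ≤ (G.cutSet A).ncard := by
  obtain ⟨P, hP, hd⟩ := h
  choose E hE hEc using fun i => G.exists_cross A (hP i) hu hv
  have hinj : Function.Injective E := by
    intro i j hij
    by_contra hne
    exact hd i j hne (E i) (hE i) (hij ▸ hE j)
  have h1 : Set.range E ⊆ G.cutSet A := by
    rintro _ ⟨i, rfl⟩; exact hEc i
  have h2 : (Set.range E).ncard = k := by
    rw [← Set.image_univ, Set.ncard_image_of_injective _ hinj, Set.ncard_univ,
      Nat.card_eq_fintype_card, Fintype.card_fin]
  rw [← h2]
  exact Set.ncard_le_ncard h1 (Set.toFinite _)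

lemma no_dangerous_pair (G : Multigraph) (s : G.V) (k : ℕ) (hk : 2 ≤ k)
    {e f : G.E} (he : s ∈ G.ends e) (hf : s ∈ G.ends f) (hef : e ≠ f)
    (hl : G.IsLiftable s k e f) {A : Set G.V} (hA : G.Dangerous s k A)
    (hae : G.otherEnd s e ∈ A) (haf : G.otherEnd s f ∈ A) : False := by
  obtain ⟨⟨u, hu⟩, hsA, ⟨v, hv⟩, hcard⟩ := hA
  have hus : u ≠ s := fun h => hsA (h ▸ hu)
  have hvA : v ∉ A := fun h => hv (Or.inl h)
  have hvs : v ≠ s := fun h => hv (Or.inr h)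
  set G' := G.lift s e f with hG'
  have hpaths : G'.EdgeDisjointPaths u v k := hl.1.2 u v hus hvs
  have hk1 : k ≤ (G'.cutSet A).ncard := G'.cut_ge A hu hvA hpaths
  -- the lifted cut injects into the old cut minus {e, f}
  have hsub : ∀ x ∈ G'.cutSet A, ∃ y : {x : G.E // x ≠ e ∧ x ≠ f},
      x = Sum.inl y ∧ y.1 ∈ G.cutSet A := by
    rintro (y | h) hx
    · obtain ⟨a, b, hab, ha, hb⟩ := hx
      exact ⟨y, rfl, ⟨a, b, hab, ha, hb⟩⟩
    · obtain ⟨a, b, hab, ha, hb⟩ := hx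
      exfalso
      have hmem : b ∈ (s(G.otherEnd s e, G.otherEnd s f) : Sym2 G.V) := by
        rw [show (s(G.otherEnd s e, G.otherEnd s f) : Sym2 G.V) = s(a, b) from hab]
        exact Sym2.mem_mk_right a b
      rcases Sym2.mem_iff.mp hmem with h' | h'
      · exact hb (h' ▸ hae)
      · exact hb (h' ▸ haf)
  set φ : G'.E → G.E := fun x => match x with
    | Sum.inl y => y.1
    | Sum.inr _ => e with hφ
  have himg : φ '' (G'.cutSet A) ⊆ G.cutSet A \ {e, f} := by
    rintro _ ⟨x, hx, rfl⟩
    obtain ⟨y, rfl, hy⟩ := hsub x hx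
    exact ⟨hy, by simp [hφ, y.2.1, y.2.2]⟩
  have hinj : Set.InjOn φ (G'.cutSet A) := by
    intro x hx x' hx' hxy
    obtain ⟨y, rfl, -⟩ := hsub x hx
    obtain ⟨y', rfl, -⟩ := hsub x' hx'
    simp only [hφ] at hxy
    exact congrArg Sum.inl (Subtype.ext hxy)
  have hle : (G'.cutSet A).ncard ≤ (G.cutSet A \ {e, f}).ncard := by
    rw [← Set.ncard_image_of_injOn hinj]
    exact Set.ncard_le_ncard himg (Set.toFinite _)
  have hefsub : ({e, f} : Set G.E) ⊆ G.cutSet A := by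
    rintro x (rfl | rfl)
    · exact ⟨G.otherEnd s x, s, by rw [G.ends_otherEnd he]; exact Sym2.eq_swap, hae, hsA⟩
    · exact ⟨G.otherEnd s x, s, by rw [G.ends_otherEnd hf]; exact Sym2.eq_swap, haf, hsA⟩
  have hdiff : (G.cutSet A \ {e, f}).ncard = (G.cutSet A).ncard - 2 := by
    rw [Set.ncard_diff hefsub, Set.ncard_pair hef]
  omega

/-- posimodularity-type inclusion -/
lemma cut_diff_subset (G : Multigraph) (A B : Set G.V) :
    G.cutSet (A \ B) ⊆ G.cutSet A ∪ G.cutSet B := by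
  rintro x ⟨a, b, hab, ha, hb⟩
  by_cases hbA : b ∈ A
  · have hbB : b ∈ B := by
      by_contra h; exact hb ⟨hbA, h⟩
    exact Or.inr ⟨b, a, hab.trans Sym2.eq_swap, hbB, ha.2⟩
  · exact Or.inl ⟨a, b, hab, ha.1, hbA⟩

lemma cut_diff_inter_subset (G : Multigraph) (A B : Set G.V) :
    G.cutSet (A \ B) ∩ G.cutSet (B \ A) ⊆ G.cutSet A ∩ G.cutSet B := by
  rintro x ⟨⟨a, b, hab, ha, hb⟩, ⟨c, d, hcd, hc, hd⟩⟩
  have hcab : c = a ∨ c = b := by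
    have : c ∈ (s(a, b) : Sym2 G.V) := by
      rw [← hab, hcd]; exact Sym2.mem_mk_left c d
    exact Sym2.mem_iff.mp this
  have hc' : c = b := by
    rcases hcab with rfl | rfl
    · exact absurd ha.1 hc.2
    · rfl
  subst hc'
  exact ⟨⟨a, c, hab, ha.1, hc.2⟩, ⟨c, a, hab.trans Sym2.eq_swap, hc.1, ha.2⟩⟩

lemma posimodular (G : Multigraph) (A B : Set G.V) :
    (G.cutSet (A \ B)).ncard + (G.cutSet (B \ A)).ncard ≤
      (G.cutSet A).ncard + (G.cutSet B).ncard := by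
  rw [← Set.ncard_union_add_ncard_inter _ _ (Set.toFinite _) (Set.toFinite _),
    ← Set.ncard_union_add_ncard_inter (G.cutSet A) (G.cutSet B) (Set.toFinite _) (Set.toFinite _)]
  have h1 : G.cutSet (A \ B) ∪ G.cutSet (B \ A) ⊆ G.cutSet A ∪ G.cutSet B := by
    apply Set.union_subset (G.cut_diff_subset A B)
    intro x hx
    exact (Set.union_comm _ _) ▸ (G.cut_diff_subset B A hx)
  exact Nat.add_le_add (Set.ncard_le_ncard h1 (Set.toFinite _))
    (Set.ncard_le_ncard (G.cut_diff_inter_subset A B) (Set.toFinite _))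

/-- If `I` is a maximal independent set, `A` a corresponding dangerous set,
and `f ∉ I`, then the other end of `f` is not in `A`. -/
lemma not_in_corr (G : Multigraph) (s : G.V) (k : ℕ) (hk : 2 ≤ k)
    {I : Set ↥(G.incEdges s)} (hI : MaxIndepSet (G.liftingGraph s k) I)
    {A : Set G.V} (hA : G.CorrDangerous s k I A)
    {f : ↥(G.incEdges s)} (hf : f ∉ I) (hend : G.otherEnd s f.1 ∈ A) : False := by
  have hni : ¬ IndepSet (G.liftingGraph s k) (insert f I) := by
    intro hind
    exact hf ((hI.2 _ hind (Set.subset_insert _ _)) ▸ Set.mem_insert f I)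
  rw [IndepSet] at hni
  push_neg at hni
  obtain ⟨a, ha, b, hb, hab⟩ := hni
  rcases Set.mem_insert_iff.mp ha with rfl | haI
  · rcases Set.mem_insert_iff.mp hb with rfl | hbI
    · exact hab.1 rfl
    · -- Adj f b, b ∈ I
      have hne : a.1 ≠ b.1 := fun h => hab.1 (Subtype.ext h)
      exact G.no_dangerous_pair s k hk a.2 b.2 hne hab.2.1 hA.1 hend (hA.2 b hbI)
  · rcases Set.mem_insert_iff.mp hb with rfl | hbI
    · -- Adj a b with b = f
      have hne : b.1 ≠ a.1 := fun h => hab.1 (Subtype.ext h.symm)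
      exact G.no_dangerous_pair s k hk b.2 a.2 hne hab.2.2 hA.1 hend (hA.2 a haI)
    · exact hI.1 a haI b hbI hab

lemma cut_lb (G : Multigraph) (s : G.V) (k : ℕ) (hk : 2 ≤ k)
    {I I' : Set ↥(G.incEdges s)}
    (hI : MaxIndepSet (G.liftingGraph s k) I) (hI' : MaxIndepSet (G.liftingGraph s k) I')
    (hIne : I.Nonempty) (hd : Disjoint I I')
    {A A' : Set G.V} (hA : G.MinCorrDangerous s k I A) (hA' : G.MinCorrDangerous s k I' A')
    {x : G.V} (hx : x ∈ A) (hx' : x ∈ A') :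
    k + 2 ≤ (G.cutSet (A \ A')).ncard := by
  -- ends of I avoid A'
  have hends : ∀ e ∈ I, G.otherEnd s e.1 ∈ A \ A' := by
    intro e heI
    refine ⟨hA.1.2 e heI, fun hmem => ?_⟩
    exact G.not_in_corr s k hk hI' hA'.1 (fun h => hd.ne_of_mem heI h rfl) hmem
  by_contra hlt
  push_neg at hlt
  obtain ⟨e₀, he₀⟩ := hIne
  have hCne : (A \ A').Nonempty := ⟨_, hends e₀ he₀⟩
  have hsC : s ∉ A \ A' := fun h => hA.1.1.2.1 h.1
  have hcomp : ((A \ A') ∪ {s})ᶜ.Nonempty := by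
    refine ⟨x, fun h => ?_⟩
    rcases h with h | h
    · exact h.2 hx'
    · exact hA.1.1.2.1 (h ▸ hx)
  have hcorr : G.CorrDangerous s k I (A \ A') :=
    ⟨⟨hCne, hsC, hcomp, by omega⟩, hends⟩
  have heq : A \ A' = A := hA.2 _ hcorr (Set.diff_subset)
  have : x ∈ A \ A' := heq.symm ▸ hx
  exact this.2 hx'

end Multigraph


/-- minimal dangerous sets corresponding to disjoint maximal
independent sets are disjoint. -/
theorem minimal_dangerous_disjoint (G : Multigraph) (s : G.V) (k : ℕ)
    (hk : 2 ≤ k) (hdeg : 4 ≤ G.deg s) (hcon : G.SKConnected s k)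
    (I₁ I₂ : Set ↥(G.incEdges s))
    (h₁ : MaxIndepSet (G.liftingGraph s k) I₁)
    (h₂ : MaxIndepSet (G.liftingGraph s k) I₂)
    (hc₁ : 2 ≤ I₁.ncard) (hc₂ : 2 ≤ I₂.ncard)
    (hdisj : Disjoint I₁ I₂)
    (A₁ A₂ : Set G.V)
    (hA₁ : G.MinCorrDangerous s k I₁ A₁)
    (hA₂ : G.MinCorrDangerous s k I₂ A₂) :
    A₁ ∩ A₂ = ∅ := by
  rw [Set.eq_empty_iff_forall_notMem]
  rintro x ⟨hx1, hx2⟩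
  have hI₁ne : I₁.Nonempty := by
    rcases I₁.eq_empty_or_nonempty with h | h
    · rw [h, Set.ncard_empty] at hc₁; omega
    · exact h
  have hI₂ne : I₂.Nonempty := by
    rcases I₂.eq_empty_or_nonempty with h | h
    · rw [h, Set.ncard_empty] at hc₂; omega
    · exact h
  have l₁ := G.cut_lb s k hk h₁ h₂ hI₁ne hdisj hA₁ hA₂ hx1 hx2
  have l₂ := G.cut_lb s k hk h₂ h₁ hI₂ne hdisj.symm hA₂ hA₁ hx2 hx1
  have hp := G.posimodular A₁ A₂
  have b₁ : (G.cutSet A₁).ncard ≤ k + 1 := hA₁.1.1.2.2.2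
  have b₂ : (G.cutSet A₂).ncard ≤ k + 1 := hA₂.1.1.2.2.2
  omega
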